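/- Let G₁, …, G_L be K×K Hermitian positive semidefinite complex matrices with each Gₗ ≺ I_K (Loewner order). Then the block linear system requiring, for every l ∈ {1,…,L}, Cₗ + Σ_{j ≠ l} Gⱼ Cⱼ = I_K has a unique solution (C₁, …, C_L) of K×K complex matrices. -/

import Mathlib

open Matrix Finset
open scoped ComplexOrder

/-!
With `S = ∑ⱼ Gⱼ Cⱼ` the `l`-th equation reads `(1 - Gₗ) Cₗ = X - S`, so `Cₗ = (1 - Gₗ)⁻¹ (X - S)`,
and substituting this back into `S` gives `(1 + M) (X - S) = X` with `M = ∑ⱼ Gⱼ (1 - Gⱼ)⁻¹`.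
This determines the solution in any ring in which every `1 - Gₗ` and `1 + M` are units. For
matrices with `0 ⪯ Gₗ ≺ 1`, each `Gₗ (1 - Gₗ)⁻¹` is a product of commuting positive semidefinite
matrices, hence `M ⪰ 0` and `1 + M ≻ 0`.
-/

section Ring

open Ring

variable {R ι : Type*} [Ring R] [Fintype ι] [DecidableEq ι]

theorem add_sum_erase_mul_eq_iff (G C : ι → R) (X : R) (l : ι) :
    C l + ∑ j ∈ univ.erase l, G j * C j = X ↔ (1 - G l) * C l = X - ∑ j, G j * C j := by
  rw [sum_erase_eq_sub (mem_univ l), sub_mul, one_mul]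
  constructor <;> intro h
  · rw [← h]; abel
  · rw [← sub_add_cancel X (∑ j, G j * C j), ← h]; abel

theorem add_sum_erase_mul_eq_iff_eq_inverse (G : ι → R) (X : R) (hB : ∀ l, IsUnit (1 - G l))
    (hT : IsUnit (1 + ∑ j, G j * (1 - G j)⁻¹ʳ)) (C : ι → R) :
    (∀ l, C l + ∑ j ∈ univ.erase l, G j * C j = X) ↔
      C = fun l ↦ (1 - G l)⁻¹ʳ * ((1 + ∑ j, G j * (1 - G j)⁻¹ʳ)⁻¹ʳ * X) := by
  set M := ∑ j, G j * (1 - G j)⁻¹ʳ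
  have sum_eq (Y : R) (hC : ∀ l, C l = (1 - G l)⁻¹ʳ * Y) : ∑ j, G j * C j = M * Y := by
    simp only [hC, ← mul_assoc, ← sum_mul, M]
  simp only [add_sum_erase_mul_eq_iff]
  constructor
  · intro hC
    set Y := X - ∑ j, G j * C j with hY
    have hC' (l : ι) : C l = (1 - G l)⁻¹ʳ * Y := by
      rw [← hC l, inverse_mul_cancel_left _ _ (hB l)]
    have hTY : (1 + M) * Y = X := by
      rw [add_mul, one_mul, ← sum_eq Y hC', hY, sub_add_cancel]
    funext l
    rw [hC', ← hTY, inverse_mul_cancel_left _ _ hT]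
  · rintro rfl l
    rw [mul_inverse_cancel_left _ _ (hB l), sum_eq _ fun _ ↦ rfl]
    nth_rewrite 2 [← mul_inverse_cancel_left _ X hT]
    noncomm_ring

theorem existsUnique_add_sum_erase_mul_eq (G : ι → R) (X : R) (hB : ∀ l, IsUnit (1 - G l))
    (hT : IsUnit (1 + ∑ j, G j * (1 - G j)⁻¹ʳ)) :
    ∃! C : ι → R, ∀ l, C l + ∑ j ∈ univ.erase l, G j * C j = X :=
  ⟨_, (add_sum_erase_mul_eq_iff_eq_inverse G X hB hT _).2 rfl,
    fun C hC ↦ (add_sum_erase_mul_eq_iff_eq_inverse G X hB hT C).1 hC⟩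

end Ring

open scoped MatrixOrder in
theorem Matrix.PosSemidef.mul_inv_one_sub {n 𝕜 : Type*} [Fintype n] [DecidableEq n] [RCLike 𝕜]
    {G : Matrix n n 𝕜} (hG : G.PosSemidef) (h : (1 - G).PosDef) :
    (G * (1 - G)⁻¹).PosSemidef := by
  have hc : Commute G (1 - G)⁻¹ := by
    rw [nonsing_inv_eq_ringInverse, Ring.inverse_of_isUnit h.isUnit]
    exact ((Commute.one_right G).sub_right (Commute.refl G)).units_inv_right
  exact (hc.mul_nonneg hG.nonneg h.inv.posSemidef.nonneg).posSemidef

theorem stmt_2_general (L K : ℕ) (G : Fin L → Matrix (Fin K) (Fin K) ℂ)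
    (hGpsd : ∀ l, (G l).PosSemidef)
    (hGlt : ∀ l, ((1 : Matrix (Fin K) (Fin K) ℂ) - G l).PosDef) :
    ∃! C : Fin L → Matrix (Fin K) (Fin K) ℂ,
      ∀ l, C l + ∑ j ∈ univ.erase l, G j * C j = 1 := by
  refine existsUnique_add_sum_erase_mul_eq G 1 (fun l ↦ (hGlt l).isUnit) ?_
  simp only [← nonsing_inv_eq_ringInverse]
  exact (PosDef.one.add_posSemidef
    (posSemidef_sum _ fun j _ ↦ (hGpsd j).mul_inv_one_sub (hGlt j))).isUnit

theorem stmt_2 (L K : ℕ) (G : Fin L → Matrix (Fin K) (Fin K) ℂ)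
    (hGh : ∀ l, (G l).IsHermitian) (hGpsd : ∀ l, (G l).PosSemidef)
    (hGlt : ∀ l, ((1 : Matrix (Fin K) (Fin K) ℂ) - G l).PosDef) :
    ∃! C : Fin L → Matrix (Fin K) (Fin K) ℂ,
      ∀ l, C l + ∑ j ∈ univ.erase l, G j * C j = 1 :=
  stmt_2_general L K G hGpsd hGlt
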